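/- Let N ≥ 1, let Q be a real symmetric positive definite N×N matrix, let B be a real N×N matrix, let s > 0 and T > 0, and set Ψ(t,ξ) = ∫₀ᵗ ‖Q^{1/2} exp(τ Bᵀ) ξ‖^{2s} dτ. Then there exists a constant c ∈ (0,1] (depending only on s, T, Q, B) such that for every v ∈ L²(ℝᴺ; ℂ) and every t ∈ [0,T]: ‖ exp(−Ψ(t,·)) v ‖_{L²(ℝᴺ)} ≤ ‖v‖_{L²(ℝᴺ)}^{1 − c t/T} · ‖ exp(−Ψ(T,·)) v ‖_{L²(ℝᴺ)}^{c t/T}. -/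

import Mathlib

open MeasureTheory Matrix NormedSpace intervalIntegral

/-- The Euclidean norm of a vector in `ℝᴺ`. -/
noncomputable def euclNorm {N : ℕ} (x : Fin N → ℝ) : ℝ :=
  Real.sqrt (∑ i, (x i) ^ 2)

/-- The square root of a positive semidefinite matrix, as `Matrix.PosSemidef.sqrt` was defined in
older Mathlib. -/
noncomputable def posSemidefSqrt {n : Type*} [Fintype n] [DecidableEq n]
    {A : Matrix n n ℝ} (hA : A.PosSemidef) : Matrix n n ℝ :=
  hA.1.eigenvectorUnitary.1 * diagonal ((↑) ∘ (√·) ∘ hA.1.eigenvalues) *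
    (star hA.1.eigenvectorUnitary : Matrix n n ℝ)

/-- `Ψ(t,ξ) = ∫₀ᵗ ‖Q^{1/2} e^{τ Bᵀ} ξ‖^{2s} dτ`. -/
noncomputable def PsiFun {N : ℕ} (Q B : Matrix (Fin N) (Fin N) ℝ) (hQ : Q.PosDef)
    (s : ℝ) (t : ℝ) (ξ : Fin N → ℝ) : ℝ :=
  ∫ τ in (0:ℝ)..t, euclNorm ((posSemidefSqrt hQ.posSemidef).mulVec ((exp (τ • Bᵀ)).mulVec ξ)) ^ (2 * s)

/-!
On `[0, T]` the matrices `Q^{1/2} e^{τBᵀ}` and their inverses are uniformly bounded, so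
`m ‖ξ‖ ≤ ‖Q^{1/2} e^{τBᵀ} ξ‖ ≤ M ‖ξ‖` for all `τ ∈ [0, T]`. Integrating in `τ` gives
`c (t/T) Ψ(T, ξ) ≤ Ψ(t, ξ)` with `c = min ((m/M)^{2s}) 1`. With `θ = c t / T` this yields the
pointwise bound `e^{-2Ψ(t)} |v|² ≤ (|v|²)^{1-θ} (e^{-2Ψ(T)} |v|²)^θ`, and Hölder's inequality with
exponents summing to one integrates it.
-/

section Holder

variable {α : Type*} [MeasurableSpace α] {μ : Measure α} {f g : α → ℝ} {p q : ℝ}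

lemma lintegral_ofReal_rpow_mul_rpow_le (hf₀ : 0 ≤ f) (hg₀ : 0 ≤ g) (hf : AEMeasurable f μ)
    (hg : AEMeasurable g μ) (hp : 0 ≤ p) (hq : 0 ≤ q) (hpq : p + q = 1) :
    ∫⁻ a, ENNReal.ofReal (f a ^ p * g a ^ q) ∂μ ≤
      (∫⁻ a, ENNReal.ofReal (f a) ∂μ) ^ p * (∫⁻ a, ENNReal.ofReal (g a) ∂μ) ^ q := by
  have hofReal : ∀ a, ENNReal.ofReal (f a ^ p * g a ^ q) =
      ENNReal.ofReal (f a) ^ p * ENNReal.ofReal (g a) ^ q := fun a => by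
    rw [ENNReal.ofReal_mul (Real.rpow_nonneg (hf₀ a) p), ENNReal.ofReal_rpow_of_nonneg (hf₀ a) hp,
      ENNReal.ofReal_rpow_of_nonneg (hg₀ a) hq]
  simp only [hofReal]
  exact ENNReal.lintegral_mul_norm_pow_le hf.ennreal_ofReal hg.ennreal_ofReal hp hq hpq

lemma lintegral_ofReal_rpow_mul_lintegral_ofReal_rpow_ne_top (hf : Integrable f μ)
    (hg : Integrable g μ) (hp : 0 ≤ p) (hq : 0 ≤ q) :
    (∫⁻ a, ENNReal.ofReal (f a) ∂μ) ^ p * (∫⁻ a, ENNReal.ofReal (g a) ∂μ) ^ q ≠ ⊤ :=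
  ENNReal.mul_ne_top (ENNReal.rpow_ne_top_of_nonneg hp hf.lintegral_lt_top.ne)
    (ENNReal.rpow_ne_top_of_nonneg hq hg.lintegral_lt_top.ne)

lemma aestronglyMeasurable_rpow_mul_rpow (hf : AEMeasurable f μ) (hg : AEMeasurable g μ) :
    AEStronglyMeasurable (fun a => f a ^ p * g a ^ q) μ :=
  (hf.pow_const p).aestronglyMeasurable.mul (hg.pow_const q).aestronglyMeasurable

theorem MeasureTheory.Integrable.rpow_mul_rpow (hf₀ : 0 ≤ f) (hg₀ : 0 ≤ g) (hf : Integrable f μ)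
    (hg : Integrable g μ) (hp : 0 ≤ p) (hq : 0 ≤ q) (hpq : p + q = 1) :
    Integrable (fun a => f a ^ p * g a ^ q) μ := by
  refine ⟨aestronglyMeasurable_rpow_mul_rpow hf.1.aemeasurable hg.1.aemeasurable, ?_⟩
  rw [hasFiniteIntegral_iff_ofReal
    (ae_of_all _ fun a => mul_nonneg (Real.rpow_nonneg (hf₀ a) p) (Real.rpow_nonneg (hg₀ a) q))]
  exact (lintegral_ofReal_rpow_mul_rpow_le hf₀ hg₀ hf.1.aemeasurable hg.1.aemeasurable hp hq
    hpq).trans_lt (lintegral_ofReal_rpow_mul_lintegral_ofReal_rpow_ne_top hf hg hp hq).lt_top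

theorem integral_rpow_mul_rpow_le (hf₀ : 0 ≤ f) (hg₀ : 0 ≤ g) (hf : Integrable f μ)
    (hg : Integrable g μ) (hp : 0 ≤ p) (hq : 0 ≤ q) (hpq : p + q = 1) :
    ∫ a, f a ^ p * g a ^ q ∂μ ≤ (∫ a, f a ∂μ) ^ p * (∫ a, g a ∂μ) ^ q := by
  rw [integral_eq_lintegral_of_nonneg_ae
      (ae_of_all _ fun a => mul_nonneg (Real.rpow_nonneg (hf₀ a) p) (Real.rpow_nonneg (hg₀ a) q))
      (aestronglyMeasurable_rpow_mul_rpow hf.1.aemeasurable hg.1.aemeasurable),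
    integral_eq_lintegral_of_nonneg_ae (ae_of_all _ hf₀) hf.1,
    integral_eq_lintegral_of_nonneg_ae (ae_of_all _ hg₀) hg.1,
    ENNReal.toReal_rpow, ENNReal.toReal_rpow, ← ENNReal.toReal_mul]
  exact ENNReal.toReal_mono (lintegral_ofReal_rpow_mul_lintegral_ofReal_rpow_ne_top hf hg hp hq)
    (lintegral_ofReal_rpow_mul_rpow_le hf₀ hg₀ hf.1.aemeasurable hg.1.aemeasurable hp hq hpq)

end Holder

section ExpWeight

variable {E : Type*} [NormedAddCommGroup E] [NormedSpace ℝ E]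

lemma norm_exp_neg_smul_sq (a : ℝ) (x : E) :
    ‖Real.exp (-a) • x‖ ^ 2 = Real.exp (-(2 * a)) * ‖x‖ ^ 2 := by
  rw [norm_smul, mul_pow, Real.norm_of_nonneg (Real.exp_pos _).le, ← Real.exp_nat_mul]
  ring_nf

lemma norm_exp_neg_smul_sq_le (x : E) {a b θ : ℝ} (h : θ * b ≤ a) :
    ‖Real.exp (-a) • x‖ ^ 2 ≤ (‖x‖ ^ 2) ^ (1 - θ) * (‖Real.exp (-b) • x‖ ^ 2) ^ θ := by
  have hx : 0 ≤ ‖x‖ ^ 2 := sq_nonneg _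
  calc ‖Real.exp (-a) • x‖ ^ 2 = Real.exp (-(2 * a)) * ‖x‖ ^ 2 := norm_exp_neg_smul_sq a x
    _ ≤ Real.exp (-(2 * b)) ^ θ * ‖x‖ ^ 2 := by
      rw [← Real.exp_mul]
      gcongr
      linarith
    _ = (‖x‖ ^ 2) ^ (1 - θ) * (‖Real.exp (-b) • x‖ ^ 2) ^ θ := by
      rw [norm_exp_neg_smul_sq, Real.mul_rpow (Real.exp_pos _).le hx, mul_left_comm,
        ← Real.rpow_add' hx (by norm_num), sub_add_cancel, Real.rpow_one]

lemma rpow_le_rpow_rpow_mul_rpow_rpow {a b c θ r : ℝ} (ha : 0 ≤ a) (hb : 0 ≤ b) (hc : 0 ≤ c)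
    (hr : 0 ≤ r) (h : a ≤ b ^ (1 - θ) * c ^ θ) :
    a ^ r ≤ (b ^ r) ^ (1 - θ) * (c ^ r) ^ θ := by
  calc a ^ r ≤ (b ^ (1 - θ) * c ^ θ) ^ r := Real.rpow_le_rpow ha h hr
    _ = (b ^ r) ^ (1 - θ) * (c ^ r) ^ θ := by
      rw [Real.mul_rpow (Real.rpow_nonneg hb _) (Real.rpow_nonneg hc _), ← Real.rpow_mul hb,
        ← Real.rpow_mul hc, ← Real.rpow_mul hb, ← Real.rpow_mul hc, mul_comm r, mul_comm r]

theorem integral_norm_exp_neg_smul_sq_le {α : Type*} [MeasurableSpace α] {μ : Measure α}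
    {v : α → E} (hv : MemLp v 2 μ) {w w' : α → ℝ} (hw' : AEStronglyMeasurable w' μ)
    (hw'₀ : 0 ≤ w') {θ : ℝ} (hθ : θ ∈ Set.Icc (0 : ℝ) 1) (h : ∀ ξ, θ * w' ξ ≤ w ξ) :
    (∫ ξ, ‖Real.exp (-w ξ) • v ξ‖ ^ 2 ∂μ) ^ ((1 : ℝ) / 2) ≤
      ((∫ ξ, ‖v ξ‖ ^ 2 ∂μ) ^ ((1 : ℝ) / 2)) ^ (1 - θ) *
        ((∫ ξ, ‖Real.exp (-w' ξ) • v ξ‖ ^ 2 ∂μ) ^ ((1 : ℝ) / 2)) ^ θ := by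
  have hv' : MemLp (fun ξ => Real.exp (-w' ξ) • v ξ) 2 μ := by
    refine hv.of_le ((Real.continuous_exp.comp_aestronglyMeasurable hw'.neg).smul hv.1)
      (ae_of_all _ fun ξ => ?_)
    rw [norm_smul, Real.norm_of_nonneg (Real.exp_pos _).le]
    exact mul_le_of_le_one_left (norm_nonneg _) (Real.exp_le_one_iff.2 (by simpa using hw'₀ ξ))
  refine rpow_le_rpow_rpow_mul_rpow_rpow (integral_nonneg fun _ => sq_nonneg _)
    (integral_nonneg fun _ => sq_nonneg _) (integral_nonneg fun _ => sq_nonneg _) (by norm_num) ?_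
  have hp : 0 ≤ 1 - θ := by linarith [hθ.2]
  have hpq : 1 - θ + θ = 1 := sub_add_cancel 1 θ
  have hint : Integrable (fun ξ => ‖v ξ‖ ^ 2) μ := hv.integrable_norm_pow two_ne_zero
  have hint' : Integrable (fun ξ => ‖Real.exp (-w' ξ) • v ξ‖ ^ 2) μ :=
    hv'.integrable_norm_pow two_ne_zero
  calc ∫ ξ, ‖Real.exp (-w ξ) • v ξ‖ ^ 2 ∂μ
      ≤ ∫ ξ, (‖v ξ‖ ^ 2) ^ (1 - θ) * (‖Real.exp (-w' ξ) • v ξ‖ ^ 2) ^ θ ∂μ :=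
        integral_mono_of_nonneg (ae_of_all _ fun _ => sq_nonneg _)
          (hint.rpow_mul_rpow (fun _ => sq_nonneg _) (fun _ => sq_nonneg _) hint' hp hθ.1 hpq)
          (ae_of_all _ fun ξ => norm_exp_neg_smul_sq_le (v ξ) (h ξ))
    _ ≤ _ := integral_rpow_mul_rpow_le (fun _ => sq_nonneg _) (fun _ => sq_nonneg _) hint hint'
        hp hθ.1 hpq

end ExpWeight

theorem intervalIntegral.mul_div_mul_integral_le_integral {g : ℝ → ℝ} {κ b t T : ℝ}
    (hκ : 0 ≤ κ) (hg : IntervalIntegrable g volume 0 T)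
    (hbounds : ∀ τ ∈ Set.Icc 0 T, κ * b ≤ g τ ∧ g τ ≤ b) (ht : t ∈ Set.Icc 0 T) :
    κ * t / T * ∫ τ in (0 : ℝ)..T, g τ ≤ ∫ τ in (0 : ℝ)..t, g τ := by
  rcases ht.1.eq_or_lt with rfl | ht₀
  · simp
  have hT : 0 < T := ht₀.trans_le ht.2
  have hupper : ∫ τ in (0 : ℝ)..T, g τ ≤ T * b := by
    simpa using integral_mono_on hT.le hg intervalIntegrable_const fun τ hτ => (hbounds τ hτ).2
  have hlower : κ * (t * b) ≤ ∫ τ in (0 : ℝ)..t, g τ := by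
    have hg' : IntervalIntegrable g volume 0 t :=
      hg.mono_set (Set.uIcc_subset_uIcc_left (Set.Icc_subset_uIcc ht))
    simpa using integral_mono_on ht.1 intervalIntegrable_const hg' fun τ hτ =>
      (hbounds τ ⟨hτ.1, hτ.2.trans ht.2⟩).1
  calc κ * t / T * ∫ τ in (0 : ℝ)..T, g τ ≤ κ * t / T * (T * b) := by gcongr
    _ = κ * (t * b) := by field_simp
    _ ≤ _ := hlower

section MatrixBounds

open scoped Matrix.Norms.L2Operator

variable {N : ℕ}

lemma euclNorm_eq_norm (x : Fin N → ℝ) :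
    euclNorm x = ‖(EuclideanSpace.equiv (Fin N) ℝ).symm x‖ := by
  simp [euclNorm, EuclideanSpace.norm_eq]

lemma euclNorm_nonneg (x : Fin N → ℝ) : 0 ≤ euclNorm x := Real.sqrt_nonneg _

lemma continuous_euclNorm : Continuous (euclNorm (N := N)) := by
  unfold euclNorm
  fun_prop

lemma euclNorm_mulVec_le (A : Matrix (Fin N) (Fin N) ℝ) (x : Fin N → ℝ) :
    euclNorm (A *ᵥ x) ≤ ‖A‖ * euclNorm x := by
  simpa [euclNorm_eq_norm] using A.l2_opNorm_mulVec ((EuclideanSpace.equiv (Fin N) ℝ).symm x)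

variable {X : Type*} [TopologicalSpace X] {K : Set X} {F G : X → Matrix (Fin N) (Fin N) ℝ}

lemma exists_euclNorm_mulVec_le (hF : Continuous F) (hK : IsCompact K) :
    ∃ M > 0, ∀ τ ∈ K, ∀ ξ, euclNorm (F τ *ᵥ ξ) ≤ M * euclNorm ξ := by
  obtain ⟨C, hC⟩ := hK.exists_bound_of_continuousOn hF.continuousOn
  refine ⟨max C 1, by positivity, fun τ hτ ξ => (euclNorm_mulVec_le _ _).trans ?_⟩
  gcongr
  · exact euclNorm_nonneg _
  · exact (hC τ hτ).trans (le_max_left _ _)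

lemma exists_euclNorm_mulVec_bounds (hF : Continuous F) (hG : Continuous G)
    (hGF : ∀ τ ∈ K, G τ * F τ = 1) (hK : IsCompact K) :
    ∃ m > 0, ∃ M > 0, ∀ τ ∈ K, ∀ ξ,
      m * euclNorm ξ ≤ euclNorm (F τ *ᵥ ξ) ∧ euclNorm (F τ *ᵥ ξ) ≤ M * euclNorm ξ := by
  obtain ⟨M, hM, hFM⟩ := exists_euclNorm_mulVec_le hF hK
  obtain ⟨M', hM', hGM⟩ := exists_euclNorm_mulVec_le hG hK
  refine ⟨M'⁻¹, inv_pos.2 hM', M, hM, fun τ hτ ξ => ⟨?_, hFM τ hτ ξ⟩⟩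
  rw [inv_mul_le_iff₀ hM']
  calc euclNorm ξ = euclNorm (G τ *ᵥ (F τ *ᵥ ξ)) := by
        rw [mulVec_mulVec, hGF τ hτ, one_mulVec]
    _ ≤ M' * euclNorm (F τ *ᵥ ξ) := hGM τ hτ _

lemma continuous_euclNorm_mulVec_rpow {F : X → Matrix (Fin N) (Fin N) ℝ} (hF : Continuous F)
    {p : ℝ} (hp : 0 ≤ p) : Continuous fun x : (Fin N → ℝ) × X => euclNorm (F x.2 *ᵥ x.1) ^ p :=
  (continuous_euclNorm.comp ((hF.comp continuous_snd).matrix_mulVec continuous_fst)).rpow_const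
    fun _ => Or.inr hp

lemma Matrix.continuous_exp_smul (A : Matrix (Fin N) (Fin N) ℝ) :
    Continuous fun τ : ℝ => exp (τ • A) :=
  (differentiable_exp_smul_const ℝ A).continuous

end MatrixBounds

section Psi

variable {N : ℕ} (Q B : Matrix (Fin N) (Fin N) ℝ) (hQ : Q.PosDef) (s : ℝ)

lemma isUnit_posSemidefSqrt {A : Matrix (Fin N) (Fin N) ℝ} (hA : A.PosDef) :
    IsUnit (posSemidefSqrt hA.posSemidef) := by
  refine (Unitary.isUnit_coe.mul (isUnit_diagonal.2 ?_)).mul Unitary.isUnit_coe.star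
  exact Pi.isUnit_iff.2 fun i => (Real.sqrt_pos.2 (hA.eigenvalues_pos i)).ne'.isUnit

lemma PsiFun_eq_integral (t : ℝ) (ξ : Fin N → ℝ) :
    PsiFun Q B hQ s t ξ =
      ∫ τ in (0 : ℝ)..t, euclNorm ((posSemidefSqrt hQ.posSemidef * exp (τ • Bᵀ)) *ᵥ ξ) ^ (2 * s) := by
  simp only [PsiFun, mulVec_mulVec]

lemma continuous_PsiFun (hs : 0 ≤ s) (t : ℝ) : Continuous (PsiFun Q B hQ s t) := by
  simp only [funext (PsiFun_eq_integral Q B hQ s t)]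
  exact intervalIntegral.continuous_parametric_intervalIntegral_of_continuous'
    (continuous_euclNorm_mulVec_rpow (continuous_const.mul (continuous_exp_smul Bᵀ))
      (by positivity)) 0 t

lemma PsiFun_nonneg {t : ℝ} (ht : 0 ≤ t) (ξ : Fin N → ℝ) : 0 ≤ PsiFun Q B hQ s t ξ :=
  intervalIntegral.integral_nonneg ht fun _ _ => Real.rpow_nonneg (euclNorm_nonneg _) _

theorem exists_mul_PsiFun_le_PsiFun (hs : 0 ≤ s) (T : ℝ) :
    ∃ c ∈ Set.Ioc (0 : ℝ) 1, ∀ t ∈ Set.Icc 0 T, ∀ ξ,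
      c * t / T * PsiFun Q B hQ s T ξ ≤ PsiFun Q B hQ s t ξ := by
  set R := posSemidefSqrt hQ.posSemidef
  have hR : R⁻¹ * R = 1 :=
    nonsing_inv_mul R ((isUnit_iff_isUnit_det R).1 (isUnit_posSemidefSqrt hQ))
  have hexp : ∀ τ : ℝ, exp ((-τ) • Bᵀ) * exp (τ • Bᵀ) = 1 := fun τ => by
    rw [← Matrix.exp_add_of_commute _ _ (((Commute.refl Bᵀ).smul_left _).smul_right _),
      ← add_smul, neg_add_cancel, zero_smul, exp_zero]
  have hGF : ∀ τ ∈ Set.Icc 0 T, exp ((-τ) • Bᵀ) * R⁻¹ * (R * exp (τ • Bᵀ)) = 1 := fun τ _ => by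
    rw [Matrix.mul_assoc, ← Matrix.mul_assoc R⁻¹, hR, Matrix.one_mul, hexp]
  have hF : Continuous fun τ : ℝ => R * exp (τ • Bᵀ) :=
    continuous_const.mul (continuous_exp_smul Bᵀ)
  have hG : Continuous fun τ : ℝ => exp ((-τ) • Bᵀ) * R⁻¹ :=
    ((continuous_exp_smul Bᵀ).comp continuous_neg).mul continuous_const
  obtain ⟨m, hm, M, hM, hbounds⟩ := exists_euclNorm_mulVec_bounds hF hG hGF isCompact_Icc
  have h2s : 0 ≤ 2 * s := by positivity
  refine ⟨min ((m / M) ^ (2 * s)) 1, ⟨lt_min (by positivity) one_pos, min_le_right _ _⟩,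
    fun t ht ξ => ?_⟩
  rw [PsiFun_eq_integral, PsiFun_eq_integral]
  refine intervalIntegral.mul_div_mul_integral_le_integral (b := (M * euclNorm ξ) ^ (2 * s))
    (le_min (by positivity) zero_le_one)
    (((continuous_euclNorm_mulVec_rpow hF h2s).comp (Continuous.prodMk_right ξ)).intervalIntegrable
      _ _) (fun τ hτ => ⟨?_, ?_⟩) ht
  · have hξ := euclNorm_nonneg ξ
    calc min ((m / M) ^ (2 * s)) 1 * (M * euclNorm ξ) ^ (2 * s)
        ≤ (m / M) ^ (2 * s) * (M * euclNorm ξ) ^ (2 * s) :=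
          mul_le_mul_of_nonneg_right (min_le_left _ _) (by positivity)
      _ = (m * euclNorm ξ) ^ (2 * s) := by
        rw [← Real.mul_rpow (by positivity) (by positivity)]
        field_simp
      _ ≤ _ := Real.rpow_le_rpow (by positivity) (hbounds τ hτ ξ).1 h2s
  · exact Real.rpow_le_rpow (euclNorm_nonneg _) (hbounds τ hτ ξ).2 h2s

end Psi

theorem stmt3_general (N : ℕ) (Q B : Matrix (Fin N) (Fin N) ℝ)
    (hQ : Q.PosDef) (s T : ℝ) (hs : 0 < s) (hT : 0 < T) :
    ∃ c : ℝ, c ∈ Set.Ioc (0 : ℝ) 1 ∧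
      ∀ v : (Fin N → ℝ) → ℂ, MemLp v 2 (volume : Measure (Fin N → ℝ)) →
        ∀ t ∈ Set.Icc (0 : ℝ) T,
          (∫ ξ, ‖Real.exp (-(PsiFun Q B hQ s t ξ)) • v ξ‖ ^ 2) ^ ((1:ℝ)/2) ≤
            ((∫ ξ, ‖v ξ‖ ^ 2) ^ ((1:ℝ)/2)) ^ (1 - c * t / T) *
              ((∫ ξ, ‖Real.exp (-(PsiFun Q B hQ s T ξ)) • v ξ‖ ^ 2) ^ ((1:ℝ)/2)) ^
                (c * t / T) := by
  obtain ⟨c, hc, hcomp⟩ := exists_mul_PsiFun_le_PsiFun Q B hQ s hs.le T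
  refine ⟨c, hc, fun v hv t ht => ?_⟩
  have hθ : c * t / T ∈ Set.Icc (0 : ℝ) 1 :=
    ⟨div_nonneg (mul_nonneg hc.1.le ht.1) hT.le,
      div_le_one_of_le₀ ((mul_le_mul hc.2 ht.2 ht.1 zero_le_one).trans_eq (one_mul T)) hT.le⟩
  exact integral_norm_exp_neg_smul_sq_le hv (continuous_PsiFun Q B hQ s hs.le T).aestronglyMeasurable
    (fun ξ => PsiFun_nonneg Q B hQ s hT.le ξ) hθ (hcomp t ht)

/-- Fourier-side logarithmic convexity: for every `v ∈ L²(ℝᴺ;ℂ)` and `t ∈ [0,T]`,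
`‖e^{−Ψ(t,·)} v‖₂ ≤ ‖v‖₂^{1−ct/T} ‖e^{−Ψ(T,·)} v‖₂^{ct/T}`. -/
theorem stmt3 (N : ℕ) (hN : 1 ≤ N) (Q B : Matrix (Fin N) (Fin N) ℝ)
    (hQ : Q.PosDef) (s T : ℝ) (hs : 0 < s) (hT : 0 < T) :
    ∃ c : ℝ, c ∈ Set.Ioc (0 : ℝ) 1 ∧
      ∀ v : (Fin N → ℝ) → ℂ, MemLp v 2 (volume : Measure (Fin N → ℝ)) →
        ∀ t ∈ Set.Icc (0 : ℝ) T,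
          (∫ ξ, ‖Real.exp (-(PsiFun Q B hQ s t ξ)) • v ξ‖ ^ 2) ^ ((1:ℝ)/2) ≤
            ((∫ ξ, ‖v ξ‖ ^ 2) ^ ((1:ℝ)/2)) ^ (1 - c * t / T) *
              ((∫ ξ, ‖Real.exp (-(PsiFun Q B hQ s T ξ)) • v ξ‖ ^ 2) ^ ((1:ℝ)/2)) ^
                (c * t / T) :=
  stmt3_general N Q B hQ s T hs hT
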